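/- With G, X, 𝔽 and the partial action (X_t, θ_t) as above, define β_t : C(X_{t⁻¹}) → C(X_t) by β_t(f) = f ∘ θ_{t⁻¹}. Then for all t, a ∈ 𝔽, β_t(1_{X_{t⁻¹}}·1_{X_a}) = 1_{X_t}·1_{X_{ta}}, where 1_U denotes the indicator function of U and each X_g is clopen. -/

import Mathlib

namespace OTW

/-- The Ott–Tomforde–Willis full shift over `A`, modelled as the set of "gap-free"
functions `ℕ → Option A`: finite words are eventually `none`, infinite sequences never. -/
def FullShift (A : Type*) : Set (ℕ → Option A) :=
  {x | ∀ n, x n = none → x (n + 1) = none}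

variable {A : Type*}

/-- The finite word `l` as an element of the full shift. -/
def ofList (l : List A) : ℕ → Option A :=
  fun n => if h : n < l.length then some (l.get ⟨n, h⟩) else none

theorem ofList_mem (l : List A) : ofList l ∈ FullShift A := by
  intro n hn
  by_cases h : n < l.length
  · simp [ofList, h] at hn
  · simp only [ofList]
    rw [dif_neg (by omega)]

/-- The infinite sequence `y` as an element of the full shift. -/
def ofSeq (y : ℕ → A) : ℕ → Option A := fun n => some (y n)

theorem ofSeq_mem (y : ℕ → A) : ofSeq y ∈ FullShift A := by
  intro n hn
  simp [ofSeq] at hn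

/-- Truncation of `x` to its first `p` letters. -/
def trunc (p : ℕ) (x : ℕ → Option A) : ℕ → Option A := fun n => if n < p then x n else none

theorem trunc_mem {x : ℕ → Option A} (hx : x ∈ FullShift A) (p : ℕ) :
    trunc p x ∈ FullShift A := by
  intro n hn
  simp only [trunc] at hn ⊢
  by_cases h : n + 1 < p
  · rw [if_pos h]
    rw [if_pos (by omega)] at hn
    exact hx n hn
  · rw [if_neg h]

/-- Generalized cylinder set `Z(w, F)`: sequences extending the finite word `w` whose
next letter (if any) is not in the finite set `F`. -/
def Cyl (w : List A) (F : Finset A) : Set (ℕ → Option A) :=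
  {x | (∀ i (h : i < w.length), x i = some (w.get ⟨i, h⟩)) ∧ ∀ a ∈ F, x w.length ≠ some a}

/-- The topology on the full shift generated by the generalized cylinder sets. -/
instance instTopoFullShift (A : Type*) : TopologicalSpace ↥(FullShift A) :=
  TopologicalSpace.generateFrom {S | ∃ w F, S = Subtype.val ⁻¹' Cyl w F}

/-- The shift map on the full shift. -/
def shiftMap (x : ↥(FullShift A)) : ↥(FullShift A) :=
  ⟨fun n => x.1 (n + 1), fun n hn => x.2 (n + 1) hn⟩

/-- The length of an element of the full shift, valued in `ℕ∞`. -/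
noncomputable def len (x : ℕ → Option A) : ℕ∞ := ⨅ n ∈ {n | x n = none}, (n : ℕ∞)

/-- `x` is an infinite sequence. -/
def IsInf (x : ℕ → Option A) : Prop := ∀ n, x n ≠ none

/-- The word `w` occurs in `x` at position `k`. -/
def hasBlockAt (x : ℕ → Option A) (w : List A) (k : ℕ) : Prop :=
  ∀ i (h : i < w.length), x (k + i) = some (w.get ⟨i, h⟩)

/-- `X_F^inf` : infinite sequences avoiding all blocks from `F`. -/
def XFinf (F : Set (List A)) : Set (ℕ → Option A) :=
  {x | IsInf x ∧ ∀ w ∈ F, ∀ k, ¬ hasBlockAt x w k}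

/-- Concatenation of a finite word with an infinite sequence. -/
def listCat (w : List A) (y : ℕ → A) : ℕ → Option A :=
  fun n => if h : n < w.length then some (w.get ⟨n, h⟩) else some (y (n - w.length))

/-- `X_F^fin` : finite words admitting infinitely many one-letter extensions to
elements of `X_F^inf`. -/
def XFfin (F : Set (List A)) : Set (ℕ → Option A) :=
  {x | ∃ w : List A, x = ofList w ∧
    {a : A | ∃ y : ℕ → A, listCat (w ++ [a]) y ∈ XFinf F}.Infinite}

/-- The shift space `X_F` determined by the forbidden words `F`. -/
def XF (F : Set (List A)) : Set (ℕ → Option A) := XFinf F ∪ XFfin F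

/-- An ultragraph: sources are vertices, ranges are sets of vertices. -/
structure Ultragraph (V E : Type*) where
  s : E → V
  r : E → Set V

/-- The set of infinite paths of an ultragraph. -/
def Ginf {V E : Type*} (G : Ultragraph V E) : Set (ℕ → Option E) :=
  {x | IsInf x ∧ ∀ n e f, x n = some e → x (n + 1) = some f → G.s f ∈ G.r e}

/-- The edge shift of an ultragraph: the closure of the set of infinite paths. -/
def edgeShift {V E : Type*} (G : Ultragraph V E) : Set ↥(FullShift E) :=
  closure {x : ↥(FullShift E) | x.1 ∈ Ginf G}

/-- A (nonempty) finite path in an ultragraph. -/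
def IsPath {V E : Type*} (G : Ultragraph V E) (l : List E) : Prop :=
  l ≠ [] ∧ l.Chain' (fun e f => G.s f ∈ G.r e)

/-- A directed graph. -/
structure DirGraph (V E : Type*) where
  s : E → V
  r : E → V

/-- A directed graph viewed as an ultragraph. -/
def DirGraph.toUltragraph {V E : Type*} (G : DirGraph V E) : Ultragraph V E :=
  ⟨G.s, fun e => {G.r e}⟩

/-- The length-one word `e` as an element of the full shift. -/
def word1 (e : A) : ↥(FullShift A) := ⟨ofList [e], ofList_mem _⟩

/-- A conjugacy between shift spaces: a length-preserving, shift-commuting, continuous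
bijection (between shift-invariant subsets). -/
structure IsConjugacy {A B : Type*} (X : Set ↥(FullShift A)) (Y : Set ↥(FullShift B))
    (φ : ↥X → ↥Y) : Prop where
  shiftInvX : ∀ x : ↥X, shiftMap x.1 ∈ X
  shiftInvY : ∀ y : ↥Y, shiftMap y.1 ∈ Y
  bijective : Function.Bijective φ
  continuous : Continuous φ
  shift_comm : ∀ x : ↥X, (φ ⟨shiftMap x.1, shiftInvX x⟩).1 = shiftMap (φ x).1
  len_eq : ∀ x : ↥X, len (φ x).1.1 = len x.1.1

/-- An eventually finite periodic conjugacy: for some `p ≥ 2`, the initial block of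
length `p` of every `p`-periodic point is mapped to the initial block of length `p`
of its image. -/
def EvFinPeriodic {A B : Type*} {X : Set ↥(FullShift A)} {Y : Set ↥(FullShift B)}
    (φ : ↥X → ↥Y) : Prop :=
  ∃ p : ℕ, 2 ≤ p ∧ ∀ x : ↥X, IsInf x.1.1 → (∀ k, x.1.1 (k + p) = x.1.1 k) →
    ∀ h : (⟨trunc p x.1.1, trunc_mem x.1.2 p⟩ : ↥(FullShift A)) ∈ X,
      ∀ i < p, (φ ⟨⟨trunc p x.1.1, trunc_mem x.1.2 p⟩, h⟩).1.1 i = (φ x).1.1 i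

/-- The range of a finite path (`univ` for the empty path). -/
def rng {V E : Type*} (G : Ultragraph V E) (l : List E) : Set V :=
  (l.getLast?.map G.r).getD Set.univ

/-- The set `X_{ab⁻¹}` of the partial action: elements of the edge shift beginning
with `a` whose next edge (if any) has source in `r(a) ∩ r(b)`. -/
def XwS {V E : Type*} (G : Ultragraph V E) (a b : List E) : Set ↥(FullShift E) :=
  {x | x ∈ edgeShift G ∧ (∀ i (h : i < a.length), x.1 i = some (a.get ⟨i, h⟩)) ∧
    ∀ e, x.1 a.length = some e → G.s e ∈ rng G a ∩ rng G b}

/-- The map `θ_{ba⁻¹}` (raw version): replaces the initial block `a` by `b`. -/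
def theta {E : Type*} (a b : List E) (x : ℕ → Option E) : ℕ → Option E :=
  fun n => if h : n < b.length then some (b.get ⟨n, h⟩) else x (n - b.length + a.length)

theorem theta_mem {E : Type*} {x : ℕ → Option E} (hx : x ∈ FullShift E) (a b : List E) :
    theta a b x ∈ FullShift E := by
  intro n hn
  simp only [theta] at hn ⊢
  split at hn
  · simp at hn
  · rename_i h
    rw [dif_neg (by omega)]
    have h2 : n + 1 - b.length + a.length = (n - b.length + a.length) + 1 := by omega
    rw [h2]
    exact hx _ hn

/-- The map `θ_{ba⁻¹}` as a self-map of the full shift. -/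
def thetaF {E : Type*} (a b : List E) (x : ↥(FullShift E)) : ↥(FullShift E) :=
  ⟨theta a b x.1, theta_mem x.2 a b⟩

/-- A valid pair `(a, b)` representing the reduced group element `ab⁻¹` of the set `V`. -/
def ValidPair {V E : Type*} (G : Ultragraph V E) (a b : List E) : Prop :=
  (a = [] ∨ IsPath G a) ∧ (b = [] ∨ IsPath G b) ∧ (rng G a ∩ rng G b).Nonempty ∧
  ∀ (ha : a ≠ []) (hb : b ≠ []), a.getLast ha ≠ b.getLast hb

/-- The element `ab⁻¹` of the free group on the edges. -/
def pf {E : Type*} (a b : List E) : FreeGroup E :=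
  (a.map FreeGroup.of).prod * ((b.map FreeGroup.of).prod)⁻¹



-- ===== auxiliary development =====
section Aux

theorem ofList_lt {A : Type*} {l : List A} {n : ℕ} (h : n < l.length) :
    ofList l n = some (l.get ⟨n, h⟩) := dif_pos h

theorem ofList_ge {A : Type*} {l : List A} {n : ℕ} (h : ¬ n < l.length) :
    ofList l n = none := dif_neg h

theorem fs_none_mono {x : ℕ → Option A} (hx : x ∈ FullShift A) {i j : ℕ} (h : x i = none)
    (hij : i ≤ j) : x j = none := by
  induction j with
  | zero => exact Nat.le_zero.mp hij ▸ h
  | succ n ih =>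
    rcases Nat.lt_or_ge i (n+1) with h'|h'
    · exact hx n (ih (by omega))
    · have : i = n + 1 := by omega
      subst this; exact h

/-- `x` starts with the finite word `a`. -/
def StartsWith (a : List A) (x : ℕ → Option A) : Prop :=
  ∀ i (h : i < a.length), x i = some (a.get ⟨i, h⟩)

theorem startsWith_take {a : List A} {x : ℕ → Option A} (h : StartsWith a x) (k : ℕ) :
    StartsWith (a.take k) x := by
  intro i hi
  have hi' : i < a.length := by
    have := List.length_take (i := k) (l := a)
    omega
  rw [h i hi']
  congr 1
  simp [List.getElem_take]

theorem startsWith_eq_take {a b : List A} {x : ℕ → Option A} (ha : StartsWith a x)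
    (hb : StartsWith b x) (h : a.length ≤ b.length) : a = b.take a.length := by
  apply List.ext_get
  · simp [min_eq_left h]
  · intro i h1 h2
    have := (ha i h1).symm.trans (hb i (by omega))
    simp only [Option.some.injEq] at this
    simpa [List.getElem_take] using this


section Graph
variable {V E : Type*} (G : Ultragraph V E)

/-- The path-like predicate: adjacent edges are compatible. -/
def PathLike (x : ℕ → Option E) : Prop :=
  ∀ n e f, x n = some e → x (n + 1) = some f → G.s f ∈ G.r e

variable {G}

theorem rng_nil : rng G ([] : List E) = Set.univ := rfl

theorem rng_ne_nil {l : List E} (h : l ≠ []) : rng G l = G.r (l.getLast h) := by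
  simp [rng, List.getLast?_eq_getLast_of_ne_nil h]

theorem rng_append {l1 l2 : List E} (h : l2 ≠ []) : rng G (l1 ++ l2) = rng G l2 := by
  simp [rng, List.getLast?_append_of_ne_nil _ h]

theorem rng_compl_finite (hfin : ∀ e : E, {f : E | G.s f ∉ G.r e}.Finite) (l : List E) :
    {f : E | G.s f ∉ rng G l}.Finite := by
  rcases eq_or_ne l [] with rfl | h
  · simp [rng_nil]
  · rw [rng_ne_nil h]; exact hfin _

theorem rng_inter_nonempty [Infinite E] (hfin : ∀ e : E, {f : E | G.s f ∉ G.r e}.Finite)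
    (l1 l2 : List E) : (rng G l1 ∩ rng G l2).Nonempty := by
  have h := ((rng_compl_finite hfin l1).union (rng_compl_finite hfin l2))
  obtain ⟨f, -, hf⟩ := (Set.infinite_univ (α := E).diff h).nonempty
  refine ⟨G.s f, ?_, ?_⟩ <;> by_contra hc <;> exact hf (by simp [hc])

theorem exists_next [Infinite E] (hfin : ∀ e : E, {f : E | G.s f ∉ G.r e}.Finite) (e : E) :
    ∃ f, G.s f ∈ G.r e := by
  obtain ⟨f, -, hf⟩ := (Set.infinite_univ (α := E).diff (hfin e)).nonempty
  exact ⟨f, by by_contra hc; exact hf hc⟩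

/-- An infinite compatible sequence of edges starting with `e`. -/
theorem exists_inf_seq [Infinite E] (hfin : ∀ e : E, {f : E | G.s f ∉ G.r e}.Finite) (e : E) :
    ∃ y : ℕ → E, y 0 = e ∧ ∀ n, G.s (y (n + 1)) ∈ G.r (y n) := by
  choose g hg using exists_next hfin
  refine ⟨fun n => Nat.rec e (fun _ prev => g prev) n, rfl, fun n => hg _⟩

theorem isPath_of_startsWith {x : ℕ → Option E} (hx : PathLike G x) {l : List E}
    (hs : StartsWith l x) (hl : l ≠ []) : IsPath G l := by
  refine ⟨hl, List.isChain_iff_getElem.2 fun i hi => ?_⟩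
  exact hx i _ _ (hs i (by omega)) (hs (i + 1) (by omega))

theorem sMem_rng_of_next {x : ℕ → Option E} (hx : PathLike G x) {l : List E}
    (hs : StartsWith l x) {e : E} (he : x l.length = some e) : G.s e ∈ rng G l := by
  rcases eq_or_ne l [] with rfl | h
  · simp [rng_nil]
  · rw [rng_ne_nil h]
    have hpos : 0 < l.length := List.length_pos_iff.2 h
    have h1 : x (l.length - 1) = some (l.get ⟨l.length - 1, by omega⟩) := hs _ (by omega)
    have h2 : l.length - 1 + 1 = l.length := by omega
    have := hx (l.length - 1) _ _ h1 (by rw [h2]; exact he)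
    rwa [show l.getLast h = l.get ⟨l.length - 1, by omega⟩ from List.getLast_eq_getElem h]
end Graph

section EdgeShiftChar
variable {V E : Type*} {G : Ultragraph V E}

theorem pathLike_of_mem_edgeShift {x : ↥(FullShift E)} (hx : x ∈ edgeShift G) :
    PathLike G x.1 := by
  have hclosed : IsClosed {z : ↥(FullShift E) | PathLike G z.1} := by
    rw [← isOpen_compl_iff, isOpen_iff_forall_mem_open]
    rintro z hz
    simp only [Set.mem_compl_iff, Set.mem_setOf_eq, PathLike] at hz
    push_neg at hz
    obtain ⟨n, e, f, he, hf, hnr⟩ := hz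
    have hsome : ∀ i : Fin (n + 2), (z.1 i).isSome := by
      rintro ⟨i, hi⟩
      rw [Option.isSome_iff_ne_none]
      intro hcon
      rw [fs_none_mono z.2 hcon (show i ≤ n + 1 by omega)] at hf
      cases hf
    set w : List E := List.ofFn (fun i : Fin (n + 2) => (z.1 i).get (hsome i)) with hw
    have hwlen : w.length = n + 2 := by simp [hw]
    have hwget : ∀ (i : ℕ) (h : i < w.length), w.get ⟨i, h⟩ = (z.1 i).get (hsome ⟨i, by omega⟩) := by
      intro i h
      exact List.get_ofFn _ _
    refine ⟨Subtype.val ⁻¹' Cyl w ∅, ?_, ?_, ?_⟩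
    · rintro y ⟨hy1, -⟩
      simp only [Set.mem_compl_iff, Set.mem_setOf_eq, PathLike]
      push_neg
      refine ⟨n, e, f, ?_, ?_, hnr⟩
      · rw [hy1 n (by omega), hwget n (by omega)]
        simp [he]
      · rw [hy1 (n + 1) (by omega), hwget (n + 1) (by omega)]
        simp [hf]
    · exact TopologicalSpace.isOpen_generateFrom_of_mem ⟨w, ∅, rfl⟩
    · refine ⟨fun i h => ?_, by simp⟩
      rw [hwget i h, Option.some_get]
  exact closure_minimal (fun z hz => fun n e f he hf => hz.2 n e f he hf) hclosed hx

theorem gen_claim {G : Ultragraph V E}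
    {U : Set ↥(FullShift E)}
    (hU : TopologicalSpace.GenerateOpen {S | ∃ w F, S = Subtype.val ⁻¹' Cyl w F} U) :
    ∀ u : List E, (⟨ofList u, ofList_mem u⟩ : ↥(FullShift E)) ∈ U →
      {f : E | ¬ ∀ z : ↥(FullShift E), z.1 ∈ Ginf G → StartsWith (u ++ [f]) z.1 → z ∈ U}.Finite := by
  induction hU with
  | basic S hS =>
    obtain ⟨w, F, rfl⟩ := hS
    intro u hu
    have hu1 : ∀ (i : ℕ) (h : i < w.length), ofList u i = some (w.get ⟨i, h⟩) := hu.1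
    have hu2 : ∀ a ∈ F, ofList u w.length ≠ some a := hu.2
    have hwlen : w.length ≤ u.length := by
      by_contra hlt
      push_neg at hlt
      have h1 := hu1 u.length (by omega)
      rw [ofList_ge (by omega)] at h1
      cases h1
    have hget : ∀ (i : ℕ) (h : i < w.length), w.get ⟨i, h⟩ = u.get ⟨i, by omega⟩ := by
      intro i h
      have h1 := hu1 i h
      rw [ofList_lt (show i < u.length by omega)] at h1
      exact (Option.some_injective _ h1).symm
    apply Set.Finite.subset F.finite_toSet
    intro f hf
    by_contra hfF
    apply hf
    intro z hz hzs
    have hzval : ∀ (i : ℕ) (h : i < u.length + 1), z.1 i = some ((u ++ [f]).get ⟨i, by simp only [List.length_append, List.length_singleton]; omega⟩) :=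
      fun i h => hzs i (by simp only [List.length_append, List.length_singleton]; omega)
    refine ⟨fun i h => ?_, fun a ha => ?_⟩
    · rw [hzval i (by omega), hget i h]
      congr 1
      exact List.getElem_append_left _
    · rcases lt_or_eq_of_le hwlen with hlt | heq
      · rw [hzval w.length (by omega)]
        intro hcon
        apply hu2 a ha
        rw [ofList_lt hlt]
        have : (u ++ [f]).get ⟨w.length, by simp; omega⟩ = u.get ⟨w.length, hlt⟩ := by
          exact List.getElem_append_left _
        rw [this] at hcon
        exact hcon
      · rw [heq, hzval u.length (by omega)]
        intro hcon
        have : (u ++ [f]).get ⟨u.length, by simp⟩ = f := by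
          simp
        rw [this] at hcon
        apply hfF
        rw [Option.some_injective _ hcon]
        exact ha
  | univ =>
    intro u hu
    apply Set.Finite.subset Set.finite_empty
    intro f hf
    exact absurd (fun z _ _ => trivial) hf
  | inter U1 U2 h1 h2 ih1 ih2 =>
    intro u hu
    apply Set.Finite.subset ((ih1 u hu.1).union (ih2 u hu.2))
    intro f hf
    by_contra hcon
    simp only [Set.mem_union, Set.mem_setOf_eq, not_or, not_not] at hcon
    exact hf fun z hz hzs => ⟨hcon.1 z hz hzs, hcon.2 z hz hzs⟩
  | sUnion T hT ih =>
    intro u hu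
    obtain ⟨t, ht, hut⟩ := hu
    apply Set.Finite.subset (ih t ht u hut)
    intro f hf
    by_contra hcon
    simp only [Set.mem_setOf_eq, not_not] at hcon
    exact hf fun z hz hzs => ⟨t, ht, hcon z hz hzs⟩

theorem mem_edgeShift_of_pathLike [Infinite E]
    (hfin : ∀ e : E, {f : E | G.s f ∉ G.r e}.Finite) {x : ↥(FullShift E)}
    (hx : PathLike G x.1) : x ∈ edgeShift G := by
  classical
  by_cases hinf : IsInf x.1
  · exact subset_closure ⟨hinf, hx⟩
  · simp only [IsInf, not_forall, not_not] at hinf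
    have hex : ∃ n, x.1 n = none := hinf
    set n0 := Nat.find hex with hn0def
    have hn0 : x.1 n0 = none := Nat.find_spec hex
    have hlt : ∀ i : Fin n0, (x.1 i).isSome := by
      rintro ⟨i, hi⟩
      rw [Option.isSome_iff_ne_none]
      exact Nat.find_min hex hi
    set u : List E := List.ofFn (fun i : Fin n0 => (x.1 i).get (hlt i)) with hu
    have hulen : u.length = n0 := by simp [hu]
    have huget : ∀ (i : ℕ) (h : i < u.length), u.get ⟨i, h⟩ = (x.1 i).get (hlt ⟨i, by omega⟩) := by
      intro i h
      simp [hu, List.get_ofFn]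
    have hxu : x.1 = ofList u := by
      funext n
      by_cases hn : n < n0
      · rw [show ofList u n = some (u.get ⟨n, by omega⟩) from ofList_lt (by omega),
          huget n (by omega), Option.some_get]
      · rw [show ofList u n = none by simp [ofList]; omega]
        exact fs_none_mono x.2 hn0 (by omega)
    rw [edgeShift, mem_closure_iff]
    intro U hU hxU
    have hgen : TopologicalSpace.GenerateOpen
        {S | ∃ w F, S = Subtype.val ⁻¹' Cyl w F} U := hU
    have hxU' : (⟨ofList u, ofList_mem u⟩ : ↥(FullShift E)) ∈ U := by
      have : x = ⟨ofList u, ofList_mem u⟩ := Subtype.ext hxu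
      rwa [this] at hxU
    have hclaim := gen_claim (G := G) hgen u hxU'
    obtain ⟨f, -, hf⟩ :=
      (Set.infinite_univ (α := E)).diff ((hclaim.union (rng_compl_finite hfin u))) |>.nonempty
    have hfgood : ∀ z : ↥(FullShift E), z.1 ∈ Ginf G → StartsWith (u ++ [f]) z.1 → z ∈ U := by
      by_contra hcon
      exact hf (Or.inl hcon)
    have hfrng : G.s f ∈ rng G u := by
      by_contra hcon
      exact hf (Or.inr hcon)
    obtain ⟨y, hy0, hyadj⟩ := exists_inf_seq hfin f
    have hzfs : listCat u y ∈ FullShift E := by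
      intro n hn
      simp only [listCat] at hn
      split at hn <;> cases hn
    set z : ↥(FullShift E) := ⟨listCat u y, hzfs⟩ with hz
    have hzsome : ∀ n, z.1 n = if h : n < u.length then some (u.get ⟨n, h⟩) else some (y (n - u.length)) := by
      intro n; rfl
    have hzG : z.1 ∈ Ginf G := by
      refine ⟨fun n => ?_, fun n e f' he hf' => ?_⟩
      · rw [hzsome n]; split <;> simp
      · rw [hzsome n] at he
        rw [hzsome (n + 1)] at hf'
        split at he
        · rename_i h1
          split at hf'
          · rename_i h2
            -- both within u: use hx with x = ofList u
            apply hx n e f'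
            · rw [hxu, ofList_lt h1]
              exact he
            · rw [hxu, ofList_lt h2]
              exact hf'
          · rename_i h2
            -- n + 1 = u.length : junction
            have hn1 : n + 1 = u.length := by omega
            have hune : u ≠ [] := by
              intro hcon
              rw [hcon] at hn1
              simp at hn1
            have hf'' : f' = y 0 := by
              have : n + 1 - u.length = 0 := by omega
              rw [this] at hf'
              exact (Option.some_injective _ hf'.symm)
            have he' : e = u.getLast hune := by
              have h3 : u.getLast hune = u.get ⟨n, h1⟩ := by
                obtain rfl : n = u.length - 1 := by omega
                exact List.getLast_eq_getElem hune
              rw [h3]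
              exact (Option.some_injective _ he.symm)
            rw [hf'', hy0, he']
            rw [rng_ne_nil hune] at hfrng
            exact hfrng
        · rename_i h1
          rw [dif_neg (by omega)] at hf'
          have he2 : e = y (n - u.length) := (Option.some_injective _ he.symm)
          have hf2 : f' = y (n + 1 - u.length) := (Option.some_injective _ hf'.symm)
          have : n + 1 - u.length = (n - u.length) + 1 := by omega
          rw [he2, hf2, this]
          exact hyadj _
    have hzS : StartsWith (u ++ [f]) z.1 := by
      intro i h
      rw [hzsome i]
      simp only [List.length_append, List.length_singleton] at h
      by_cases hi : i < u.length
      · rw [dif_pos hi]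
        congr 1
        exact (List.getElem_append_left _).symm
      · have hieq : i = u.length := by omega
        rw [dif_neg hi]
        subst hieq
        simp [hy0]
    exact ⟨z, hfgood z hzG hzS, hzG⟩

end EdgeShiftChar

section ThetaLemmas
variable {V E : Type*} {G : Ultragraph V E}

theorem mem_XwS_iff [Infinite E] (hfin : ∀ e : E, {f : E | G.s f ∉ G.r e}.Finite)
    {a b : List E} {x : ↥(FullShift E)} :
    x ∈ XwS G a b ↔ PathLike G x.1 ∧ StartsWith a x.1 ∧
      (∀ e, x.1 a.length = some e → G.s e ∈ rng G a ∩ rng G b) := by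
  constructor
  · rintro ⟨h1, h2, h3⟩
    exact ⟨pathLike_of_mem_edgeShift h1, h2, h3⟩
  · rintro ⟨h1, h2, h3⟩
    exact ⟨mem_edgeShift_of_pathLike hfin h1, h2, h3⟩

theorem theta_lt {a b : List E} {x : ℕ → Option E} {n : ℕ} (h : n < b.length) :
    theta a b x n = some (b.get ⟨n, h⟩) := dif_pos h

theorem theta_ge {a b : List E} {x : ℕ → Option E} {n : ℕ} (h : ¬ n < b.length) :
    theta a b x n = x (n - b.length + a.length) := dif_neg h

theorem theta_theta {a b : List E} {x : ℕ → Option E} (hs : StartsWith a x) :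
    theta b a (theta a b x) = x := by
  funext n
  by_cases h : n < a.length
  · rw [theta_lt h, hs n h]
  · rw [theta_ge h, theta_ge (show ¬ n - a.length + b.length < b.length by omega)]
    congr 1
    omega

theorem thetaF_thetaF {a b : List E} {x : ↥(FullShift E)} (hs : StartsWith a x.1) :
    thetaF b a (thetaF a b x) = x := Subtype.ext (theta_theta hs)

theorem thetaF_mem_XwS [Infinite E] (hfin : ∀ e : E, {f : E | G.s f ∉ G.r e}.Finite)
    {b c : List E} (hc : c = [] ∨ IsPath G c) {x : ↥(FullShift E)} (hx : x ∈ XwS G b c) :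
    thetaF b c x ∈ XwS G c b := by
  obtain ⟨hpl, hst, hcond⟩ := (mem_XwS_iff hfin).1 hx
  have hval : ∀ n, (thetaF b c x).1 n = theta b c x.1 n := fun n => rfl
  refine (mem_XwS_iff hfin).2 ⟨?_, ?_, ?_⟩
  · intro n e f he hf
    rw [hval] at he hf
    by_cases h1 : n + 1 < c.length
    · rw [theta_lt (show n < c.length by omega)] at he
      rw [theta_lt h1] at hf
      obtain rfl : e = c.get ⟨n, by omega⟩ := Option.some_injective _ he.symm
      obtain rfl : f = c.get ⟨n + 1, h1⟩ := Option.some_injective _ hf.symm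
      rcases hc with rfl | ⟨-, hch⟩
      · simp at h1
      · exact List.isChain_iff_getElem.1 hch n (by omega)
    · by_cases h2 : n < c.length
      · -- n + 1 = c.length : junction
        have hn1 : n + 1 = c.length := by omega
        have hcne : c ≠ [] := by
          intro hcon
          rw [hcon] at hn1
          simp at hn1
        rw [theta_lt h2] at he
        rw [theta_ge h1, show n + 1 - c.length + b.length = b.length by omega] at hf
        have := hcond f hf
        obtain rfl : e = c.get ⟨n, h2⟩ := Option.some_injective _ he.symm
        have hge : c.getLast hcne = c.get ⟨n, h2⟩ := by
          obtain rfl : n = c.length - 1 := by omega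
          exact List.getLast_eq_getElem hcne
        rw [← hge]
        rw [rng_ne_nil hcne] at this
        exact this.2
      · rw [theta_ge h2] at he
        rw [theta_ge (show ¬ n + 1 < c.length by omega),
          show n + 1 - c.length + b.length = (n - c.length + b.length) + 1 by omega] at hf
        exact hpl _ _ _ he hf
  · intro i h
    exact theta_lt h
  · intro e he
    rw [hval, theta_ge (by omega), show c.length - c.length + b.length = b.length by omega] at he
    have := hcond e he
    exact ⟨this.2, this.1⟩

theorem theta_shift {b c : List E} {x : ℕ → Option E} (i : ℕ) :
    theta b c x (c.length + i) = x (b.length + i) := by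
  rw [theta_ge (by omega)]
  congr 1
  omega

end ThetaLemmas

section FG
variable {E : Type*}

theorem prod_map_of (l : List E) :
    (l.map FreeGroup.of).prod = FreeGroup.mk (l.map (fun e => (e, true))) := by
  induction l with
  | nil => simp [FreeGroup.one_eq_mk]
  | cons a l ih =>
    simp only [List.map_cons, List.prod_cons, ih]
    rw [show FreeGroup.of a = FreeGroup.mk [(a, true)] from rfl, FreeGroup.mul_mk]
    rfl

theorem invRev_map_true (b : List E) :
    FreeGroup.invRev (b.map (fun e => (e, true))) = (b.map (fun e => (e, false))).reverse := by
  simp [FreeGroup.invRev, List.map_map, Function.comp_def]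

theorem pf_eq_mk (a b : List E) :
    pf a b = FreeGroup.mk
      (a.map (fun e => (e, true)) ++ (b.map (fun e => (e, false))).reverse) := by
  rw [pf, prod_map_of, prod_map_of, FreeGroup.inv_mk, FreeGroup.mul_mk, invRev_map_true]

theorem reduce_eq_self [DecidableEq E] {L : List (E × Bool)} (h : L.Chain' (fun p q => ¬(p.1 = q.1 ∧ p.2 = !q.2))) :
    FreeGroup.reduce L = L := by
  induction L with
  | nil => rfl
  | cons x L ih =>
    have hL := ih h.tail
    rw [FreeGroup.reduce.cons, hL]
    cases L with
    | nil => rfl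
    | cons y t =>
      have hxy : ¬(x.1 = y.1 ∧ x.2 = !y.2) := (List.isChain_cons_cons.1 h).1
      simp only [if_neg hxy]

theorem valid_word_reduced {a b : List E}
    (hlast : ∀ (ha : a ≠ []) (hb : b ≠ []), a.getLast ha ≠ b.getLast hb) :
    (a.map (fun e => (e, true)) ++ (b.map (fun e => (e, false))).reverse).Chain'
      (fun p q => ¬(p.1 = q.1 ∧ p.2 = !q.2)) := by
  unfold List.Chain'; rw [List.isChain_append]
  refine ⟨?_, ?_, ?_⟩
  · refine List.isChain_iff_getElem.2 fun i hi => ?_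
    rw [List.length_map] at hi
    rw [List.getElem_map, List.getElem_map]
    simp
  · refine List.isChain_iff_getElem.2 fun i hi => ?_
    have h1 : ∀ (j : ℕ) (hj : j < (b.map (fun e => (e, false))).reverse.length),
        ((b.map (fun e => (e, false))).reverse.get ⟨j, hj⟩).2 = false := by
      intro j hj
      rw [List.get_reverse']
      · simp
      · simp at hj ⊢
        omega
    intro hcon
    have := hcon.2
    simp only [List.get_eq_getElem] at h1; rw [h1 i (by omega), h1 (i + 1) (by omega)] at this
    simp at this
  · intro p hp q hq
    have hane : a ≠ [] := by
      rintro rfl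
      simp at hp
    have hbne : b ≠ [] := by
      rintro rfl
      simp at hq
    have hp' : p = (a.getLast hane, true) := by
      rw [List.getLast?_eq_getLast_of_ne_nil (by simpa using hane),
        List.getLast_map] at hp
      · exact Option.some_injective _ hp.symm
    have hq' : q = (b.getLast hbne, false) := by
      rw [List.head?_reverse, List.getLast?_eq_getLast_of_ne_nil (by simpa using hbne),
        List.getLast_map] at hq
      · exact Option.some_injective _ hq.symm
    rw [hp', hq']
    intro hcon
    exact hlast hane hbne hcon.1

theorem pf_valid_inj [DecidableEq E] {a b a' b' : List E}
    (hl : ∀ (ha : a ≠ []) (hb : b ≠ []), a.getLast ha ≠ b.getLast hb)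
    (hl' : ∀ (ha : a' ≠ []) (hb : b' ≠ []), a'.getLast ha ≠ b'.getLast hb)
    (h : pf a b = pf a' b') : a = a' ∧ b = b' := by
  rw [pf_eq_mk, pf_eq_mk] at h
  have hw := FreeGroup.reduce.sound h
  rw [reduce_eq_self (valid_word_reduced hl), reduce_eq_self (valid_word_reduced hl')] at hw
  have htrue := congrArg (List.filter (fun p => p.2)) hw
  have hfalse := congrArg (List.filter (fun p => !p.2)) hw
  simp only [List.filter_append, List.filter_reverse, List.filter_map] at htrue hfalse
  simp only [Function.comp_def, List.filter_true, List.filter_false] at htrue hfalse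
  constructor
  · have : a.map (fun e => (e, true)) = a'.map (fun e => (e, true)) := by
      simpa using htrue
    exact List.map_injective_iff.2 (fun x y hxy => congrArg Prod.fst hxy) this
  · have : b.map (fun e => (e, false)) = b'.map (fun e => (e, false)) := by
      have := congrArg List.reverse hfalse
      simpa using this
    exact List.map_injective_iff.2 (fun x y hxy => congrArg Prod.fst hxy) this

theorem pf_inv (a b : List E) : pf b a = (pf a b)⁻¹ := by
  simp [pf, mul_inv_rev]

theorem pf_mul_case1 (b c p' q : List E) : pf b c * pf (c ++ p') q = pf (b ++ p') q := by
  simp only [pf, List.map_append, List.prod_append]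
  group

theorem pf_mul_case2 (b p c' q : List E) : pf b (p ++ c') * pf p q = pf b (q ++ c') := by
  simp only [pf, List.map_append, List.prod_append]
  group

theorem pf_mul_case3 (m n s c : List E) : pf (m ++ s) c * pf c (n ++ s) = pf m n := by
  simp only [pf, List.map_append, List.prod_append]
  group

end FG

section LCP
variable {E : Type*}

open Classical in
/-- Longest common prefix of two lists. -/
noncomputable def lcp : List E → List E → List E
  | a :: l, b :: m => if a = b then a :: lcp l m else []
  | _, _ => []

theorem lcp_append_left : ∀ u v : List E, lcp u v ++ u.drop (lcp u v).length = u
  | [], v => by cases v <;> rfl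
  | a :: l, [] => rfl
  | a :: l, b :: m => by
    rw [lcp]
    split
    · simpa using lcp_append_left l m
    · rfl

theorem lcp_append_right : ∀ u v : List E, lcp u v ++ v.drop (lcp u v).length = v
  | [], v => by cases v <;> rfl
  | a :: l, [] => rfl
  | a :: l, b :: m => by
    rw [lcp]
    split
    · rename_i h
      subst h
      simpa using lcp_append_right l m
    · rfl

theorem lcp_max : ∀ (u v : List E) (a : E),
    (u.drop (lcp u v).length).head? = some a → (v.drop (lcp u v).length).head? = some a → False
  | [], v, a => by
    intro h
    simp at h
  | a :: l, [], a' => by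
    intro _ h
    simp at h
  | a :: l, b :: m, a' => by
    rw [lcp]
    split
    · rename_i h
      subst h
      intro h1 h2
      exact lcp_max l m a' (by simpa using h1) (by simpa using h2)
    · rename_i h
      intro h1 h2
      simp only [List.length_nil, List.drop_zero, List.head?_cons, Option.some.injEq] at h1 h2
      exact h (h1.trans h2.symm)

theorem cancel_suffix (b q : List E) : ∃ m n s : List E,
    b = m ++ s ∧ q = n ++ s ∧
    (∀ (hm : m ≠ []) (hn : n ≠ []), m.getLast hm ≠ n.getLast hn) := by
  set k := lcp b.reverse q.reverse with hk
  have hb : b.reverse = k ++ b.reverse.drop k.length := (lcp_append_left _ _).symm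
  have hq : q.reverse = k ++ q.reverse.drop k.length := (lcp_append_right _ _).symm
  refine ⟨(b.reverse.drop k.length).reverse, (q.reverse.drop k.length).reverse, k.reverse,
    ?_, ?_, ?_⟩
  · conv_lhs => rw [← b.reverse_reverse, hb]
    rw [List.reverse_append]
  · conv_lhs => rw [← q.reverse_reverse, hq]
    rw [List.reverse_append]
  · intro hm hn hcon
    have hbne : b.reverse.drop k.length ≠ [] := fun hc => hm (by rw [hc]; rfl)
    have hqne : q.reverse.drop k.length ≠ [] := fun hc => hn (by rw [hc]; rfl)
    have hLm := List.getLast?_eq_getLast_of_ne_nil hm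
    have hLn := List.getLast?_eq_getLast_of_ne_nil hn
    rw [← List.head?_reverse, List.reverse_reverse] at hLm hLn
    exact lcp_max b.reverse q.reverse _ hLm (hcon ▸ hLn)
end LCP

section Main
variable {V E : Type*} {G : Ultragraph V E}

theorem getLast_eq_of_getLast?_eq {l l' : List E} (h : l.getLast? = l'.getLast?)
    (hl : l ≠ []) (hl' : l' ≠ []) : l.getLast hl = l'.getLast hl' := by
  rw [List.getLast?_eq_getLast_of_ne_nil hl, List.getLast?_eq_getLast_of_ne_nil hl'] at h
  exact Option.some_injective _ h

theorem pathStep {l : List E} (hl : IsPath G l) {i : ℕ} (h : i + 1 < l.length) :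
    G.s (l.get ⟨i + 1, h⟩) ∈ G.r (l.get ⟨i, by omega⟩) :=
  List.isChain_iff_getElem.1 hl.2 i (by omega)

theorem get_coll_congr {L L' : List E} (h : L = L') {j : ℕ} (hj : j < L.length)
    (hj' : j < L'.length) : L.get ⟨j, hj⟩ = L'.get ⟨j, hj'⟩ := by
  subst h
  rfl

theorem get_idx_congr {L : List E} {i j : ℕ} (h : i = j) (hi : i < L.length)
    (hj : j < L.length) : L.get ⟨i, hi⟩ = L.get ⟨j, hj⟩ := by
  subst h
  rfl

theorem get_append_right_val {L1 L2 : List E} {i : ℕ} (hi : L1.length ≤ i)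
    (h : i < (L1 ++ L2).length) (hj : i - L1.length < L2.length) :
    (L1 ++ L2).get ⟨i, h⟩ = L2.get ⟨i - L1.length, hj⟩ := by
  rw [List.get_eq_getElem, List.get_eq_getElem]
  exact List.getElem_append_right hi

theorem get_append_left_val {L1 L2 : List E} {i : ℕ} (hi : i < L1.length)
    (h : i < (L1 ++ L2).length) : (L1 ++ L2).get ⟨i, h⟩ = L1.get ⟨i, hi⟩ := by
  rw [List.get_eq_getElem, List.get_eq_getElem]
  exact List.getElem_append_left hi

theorem startsWith_of_append {u v : List E} {x : ℕ → Option E} (h : StartsWith (u ++ v) x) :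
    StartsWith u x := by
  intro i hi
  rw [h i (by rw [List.length_append]; omega)]
  congr 1
  rw [List.get_eq_getElem, List.get_eq_getElem]
  exact List.getElem_append_left hi

theorem keyA [Infinite E] (hfin : ∀ e : E, {f : E | G.s f ∉ G.r e}.Finite)
    {b c p q : List E} (hbc : ValidPair G b c) (hpq : ValidPair G p q)
    {x : ↥(FullShift E)} (hx : x ∈ XwS G b c) (hy : thetaF b c x ∈ XwS G p q) :
    ∃ m n : List E, ValidPair G m n ∧ pf b c * pf p q = pf m n ∧ x ∈ XwS G m n := by
  obtain ⟨hxpl, hxst, hxcond⟩ := (mem_XwS_iff hfin).1 hx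
  obtain ⟨hypl, hyst, hycond⟩ := (mem_XwS_iff hfin).1 hy
  have hyc : StartsWith c (thetaF b c x).1 := fun i h => theta_lt h
  have hyval : ∀ i : ℕ, (thetaF b c x).1 (c.length + i) = x.1 (b.length + i) :=
    fun i => theta_shift i
  rcases lt_trichotomy c.length p.length with hlt | heq | hgt
  · -- c is a proper prefix of p
    set p' := p.drop c.length with hp'
    have hcp : c = p.take c.length := startsWith_eq_take hyc hyst (le_of_lt hlt)
    have hpdecomp : p = c ++ p' := by
      conv_lhs => rw [← List.take_append_drop c.length p]
      rw [← hcp]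
    have hp'ne : p' ≠ [] := by
      intro hcon
      have := congrArg List.length hcon
      simp only [hp', List.length_drop, List.length_nil] at this
      omega
    have hpne : p ≠ [] := by
      rw [hpdecomp]
      simp [hp'ne]
    have hbp'ne : b ++ p' ≠ [] := by simp [hp'ne]
    have hbp' : StartsWith (b ++ p') x.1 := by
      intro i h
      rw [List.length_append] at h
      by_cases hi : i < b.length
      · rw [hxst i hi]
        congr 1
        rw [List.get_eq_getElem, List.get_eq_getElem]
        exact (List.getElem_append_left hi).symm
      · obtain ⟨j, rfl⟩ : ∃ j, i = b.length + j := ⟨i - b.length, by omega⟩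
        have hjlt : c.length + j < p.length := by
          have := congrArg List.length hpdecomp
          rw [List.length_append] at this
          omega
        rw [← hyval j, hyst _ hjlt]
        congr 1
        have hplen : p.length = c.length + p'.length := by
          have := congrArg List.length hpdecomp
          rwa [List.length_append] at this
        have hjp' : j < p'.length := by omega
        rw [get_coll_congr hpdecomp hjlt (by rw [← hpdecomp]; exact hjlt),
          get_append_right_val (by omega) _ (by omega),
          get_append_right_val (by omega) _ (by omega)]
        exact get_idx_congr (by omega) _ _
    refine ⟨b ++ p', q, ⟨Or.inr (isPath_of_startsWith hxpl hbp' hbp'ne), hpq.2.1,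
      rng_inter_nonempty hfin _ _, ?_⟩, ?_, ?_⟩
    · intro hm hn
      have hlasts : (b ++ p').getLast hm = p.getLast hpne := by
        apply getLast_eq_of_getLast?_eq
        rw [hpdecomp, List.getLast?_append_of_ne_nil _ hp'ne,
          List.getLast?_append_of_ne_nil _ hp'ne]
      rw [hlasts]
      exact hpq.2.2.2 hpne hn
    · rw [hpdecomp]
      exact pf_mul_case1 b c p' q
    · refine (mem_XwS_iff hfin).2 ⟨hxpl, hbp', ?_⟩
      intro e he
      have hlen : (b ++ p').length = b.length + p'.length := List.length_append
      have hplen : p.length = c.length + p'.length := by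
        have := congrArg List.length hpdecomp
        rwa [List.length_append] at this
      have hye : (thetaF b c x).1 p.length = some e := by
        rw [hplen, hyval]
        rw [hlen] at he
        exact he
      have := hycond e hye
      have hrng1 : rng G (b ++ p') = rng G p := by
        rw [rng_append hp'ne, hpdecomp, rng_append hp'ne]
      rw [hrng1]
      exact this
  · -- p = c : cancellation between b and q
    have hpc : p = c := by
      have := startsWith_eq_take hyst hyc (le_of_eq heq.symm)
      rw [← heq, List.take_length] at this
      exact this
    obtain ⟨m, n, s', hbm, hqn, hlast⟩ := cancel_suffix b q
    have hmpre : StartsWith m x.1 := by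
      rw [hbm] at hxst
      exact startsWith_of_append hxst
    refine ⟨m, n, ⟨?_, ?_, rng_inter_nonempty hfin _ _, hlast⟩, ?_, ?_⟩
    · rcases eq_or_ne m [] with rfl | hm
      · exact Or.inl rfl
      · have hbne : b ≠ [] := by rw [hbm]; simp [hm]
        have hbpath := hbc.1.resolve_left hbne
        refine Or.inr ⟨hm, ?_⟩
        have := hbpath.2
        rw [hbm] at this
        exact this.left_of_append
    · rcases eq_or_ne n [] with rfl | hn
      · exact Or.inl rfl
      · have hqne : q ≠ [] := by rw [hqn]; simp [hn]
        have hqpath := hpq.2.1.resolve_left hqne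
        refine Or.inr ⟨hn, ?_⟩
        have := hqpath.2
        rw [hqn] at this
        exact this.left_of_append
    · rw [hpc, hbm, hqn]
      exact pf_mul_case3 m n s' c
    · refine (mem_XwS_iff hfin).2 ⟨hxpl, hmpre, ?_⟩
      intro e he
      rcases eq_or_ne s' [] with rfl | hs
      · -- no cancellation : m = b, n = q
        rw [List.append_nil] at hbm hqn
        have h1 := hxcond e (by rw [hbm]; exact he)
        have hye : (thetaF b c x).1 p.length = some e := by
          have h0 := hyval 0
          rw [Nat.add_zero, Nat.add_zero] at h0
          rw [hpc, h0, hbm]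
          exact he
        have h2 := hycond e hye
        rw [show rng G m = rng G b by rw [hbm], show rng G n = rng G q by rw [hqn]]
        exact ⟨h1.1, h2.2⟩
      · -- proper cancellation
        have hmlt : m.length < b.length := by
          have := congrArg List.length hbm
          rw [List.length_append] at this
          have : s'.length ≠ 0 := fun hc => hs (List.length_eq_zero_iff.1 hc)
          omega
        have hnlt : n.length < q.length := by
          have := congrArg List.length hqn
          rw [List.length_append] at this
          have : s'.length ≠ 0 := fun hc => hs (List.length_eq_zero_iff.1 hc)
          omega
        have hee : e = b.get ⟨m.length, hmlt⟩ := by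
          have := hxst m.length hmlt
          rw [he] at this
          exact Option.some_injective _ this
        constructor
        · -- s e ∈ rng m
          rcases eq_or_ne m [] with rfl | hm
          · rw [rng_nil]; exact Set.mem_univ _
          · have hmpos : 0 < m.length := List.length_pos_iff.2 hm
            have h1 : x.1 (m.length - 1) = some (m.get ⟨m.length - 1, by omega⟩) :=
              hmpre _ (by omega)
            have h2 : m.length - 1 + 1 = m.length := by omega
            have := hxpl (m.length - 1) _ _ h1 (by rw [h2]; exact he)
            rw [rng_ne_nil hm]
            rwa [show m.getLast hm = m.get ⟨m.length - 1, by omega⟩ from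
              List.getLast_eq_getElem hm]
        · -- s e ∈ rng n
          rcases eq_or_ne n [] with rfl | hn
          · rw [rng_nil]; exact Set.mem_univ _
          · have hqne : q ≠ [] := by rw [hqn]; simp [hn]
            have hqpath := hpq.2.1.resolve_left hqne
            have hnpos : 0 < n.length := List.length_pos_iff.2 hn
            have hstep := pathStep hqpath (i := n.length - 1)
              (show n.length - 1 + 1 < q.length by omega)
            rw [rng_ne_nil hn]
            have hs'pos : 0 < s'.length := List.length_pos_iff.2 hs
            have hqlen : q.length = n.length + s'.length := by
              have := congrArg List.length hqn
              rwa [List.length_append] at this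
            have hblen : b.length = m.length + s'.length := by
              have := congrArg List.length hbm
              rwa [List.length_append] at this
            have hq1 : q.get ⟨n.length - 1 + 1, by omega⟩ = e := by
              rw [hee]
              rw [get_coll_congr hqn _ (by simp; omega),
                get_append_right_val (by omega) _ (by omega),
                get_coll_congr hbm hmlt (by simp; omega),
                get_append_right_val (by omega) _ (by omega)]
              exact get_idx_congr (by omega) _ _
            have hq2 : q.get ⟨n.length - 1, by omega⟩ = n.getLast hn := by
              rw [get_coll_congr hqn _ (by simp; omega),
                get_append_left_val (by omega),
                show n.getLast hn = n.get ⟨n.length - 1, by omega⟩ from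
                  List.getLast_eq_getElem hn]
            rw [hq1, hq2] at hstep
            exact hstep
  · -- p is a proper prefix of c
    set c' := c.drop p.length with hc'
    have hpc : p = c.take p.length := startsWith_eq_take hyst hyc (le_of_lt hgt)
    have hcdecomp : c = p ++ c' := by
      conv_lhs => rw [← List.take_append_drop p.length c]
      rw [← hpc]
    have hc'ne : c' ≠ [] := by
      intro hcon
      have := congrArg List.length hcon
      simp only [hc', List.length_drop, List.length_nil] at this
      omega
    have hcne : c ≠ [] := by
      rw [hcdecomp]
      simp [hc'ne]
    have hcpath := hbc.2.1.resolve_left hcne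
    have hqc'ne : q ++ c' ≠ [] := by simp [hc'ne]
    -- the edge after p in y is the head of c'
    have hyp : (thetaF b c x).1 p.length = some (c.get ⟨p.length, hgt⟩) := hyc p.length hgt
    have hheadc' : c.get ⟨p.length, hgt⟩ = c'.get ⟨0, List.length_pos_iff.2 hc'ne⟩ := by
      rw [get_coll_congr hcdecomp hgt (by rw [← hcdecomp]; exact hgt),
        get_append_right_val (le_refl _) _ (by simp [List.length_pos_iff.2 hc'ne])]
      exact get_idx_congr (by omega) _ _
    have hjunction := hycond _ hyp
    refine ⟨b, q ++ c', ⟨hbc.1, Or.inr ⟨hqc'ne, ?_⟩, rng_inter_nonempty hfin _ _, ?_⟩, ?_, ?_⟩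
    · -- chain' (q ++ c')
      apply List.IsChain.append
      · rcases hpq.2.1 with rfl | hqpath
        · exact List.isChain_nil
        · exact hqpath.2
      · have := hcpath.2
        rw [hcdecomp] at this
        exact this.right_of_append
      · intro z hz w hw
        have hqne : q ≠ [] := by
          intro hcon
          subst hcon
          simp at hz
        have hz' : z = q.getLast hqne := by
          rw [Option.mem_def, List.getLast?_eq_getLast_of_ne_nil hqne] at hz
          exact (Option.some_injective _ hz).symm
        have hw' : w = c'.get ⟨0, List.length_pos_iff.2 hc'ne⟩ := by
          rw [Option.mem_def, List.head?_eq_head hc'ne] at hw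
          rw [(Option.some_injective _ hw).symm, List.get_eq_getElem,
            List.head_eq_getElem]
        rw [hz', hw', ← hheadc']
        have := hjunction.2
        rwa [rng_ne_nil hqne] at this
    · intro hb' hn
      have hlasts : (q ++ c').getLast hqc'ne = c.getLast hcne := by
        apply getLast_eq_of_getLast?_eq
        rw [hcdecomp, List.getLast?_append_of_ne_nil _ hc'ne,
          List.getLast?_append_of_ne_nil _ hc'ne]
      rw [hlasts]
      exact hbc.2.2.2 hb' hcne
    · conv_lhs => rw [hcdecomp]
      exact pf_mul_case2 b p c' q
    · refine (mem_XwS_iff hfin).2 ⟨hxpl, hxst, ?_⟩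
      intro e he
      have h1 := hxcond e he
      have hrng : rng G (q ++ c') = rng G c := by
        rw [rng_append hc'ne, hcdecomp, rng_append hc'ne]
      rw [hrng]
      exact h1

end Main

section Final
variable {V E : Type*} {G : Ultragraph V E}

theorem ValidPair.symm {b c : List E} (h : ValidPair G b c) : ValidPair G c b :=
  ⟨h.2.1, h.1, by rw [Set.inter_comm]; exact h.2.2.1, fun ha hb => (h.2.2.2 hb ha).symm⟩

theorem keyB [Infinite E] (hfin : ∀ e : E, {f : E | G.s f ∉ G.r e}.Finite)
    {b c p q m n : List E} (hbc : ValidPair G b c) (hpq : ValidPair G p q)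
    (hmn : ValidPair G m n) (hpf : pf b c * pf p q = pf m n)
    {x : ↥(FullShift E)} (hx : x ∈ XwS G b c) (hxmn : x ∈ XwS G m n) :
    thetaF b c x ∈ XwS G p q := by
  classical
  have hy : thetaF b c x ∈ XwS G c b := thetaF_mem_XwS hfin hbc.2.1 hx
  have hxeq : thetaF c b (thetaF b c x) = x := thetaF_thetaF hx.2.1
  have hx' : thetaF c b (thetaF b c x) ∈ XwS G m n := by rw [hxeq]; exact hxmn
  obtain ⟨p', q', hvp', hpf', hyp'⟩ := keyA hfin hbc.symm hmn hy hx'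
  have hpp : pf p' q' = pf p q := by
    rw [← hpf', pf_inv b c, ← hpf]
    group
  obtain ⟨rfl, rfl⟩ := pf_valid_inj hvp'.2.2.2 hpq.2.2.2 hpp
  exact hyp'

end Final

end Aux

/-- `β_t(1_{X_{t⁻¹}}·1_{X_a}) = 1_{X_t}·1_{X_{ta}}`.  Here `t = bc⁻¹`,
`a = pq⁻¹` and `ta = mn⁻¹` are represented by valid pairs of positive words, `θ_{t⁻¹}`
is `thetaF b c`, and `β_t(f)(x) = f(θ_{t⁻¹}(x))` for `x ∈ X_t` (and `0` elsewhere, which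
is accounted for by multiplying both sides with `1_{X_t}`); the second clause covers the
case `ta ∉ V`, where `X_{ta} = ∅`. -/
theorem beta_indicator_eq {V E : Type*} [Countable V] [Countable E] [Infinite E]
    (G : Ultragraph V E) (hr : ∀ e, (G.r e).Nonempty)
    (hfin : ∀ e : E, {f : E | G.s f ∉ G.r e}.Finite) :
    (∀ b c p q m n : List E, ValidPair G b c → ValidPair G p q → ValidPair G m n →
      pf b c * pf p q = pf m n →
      ∀ x : ↥(FullShift E),
        Set.indicator (XwS G b c) (fun _ => (1 : ℝ)) x *
          Set.indicator (XwS G c b ∩ XwS G p q) (fun _ => (1 : ℝ)) (thetaF b c x) =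
        Set.indicator (XwS G b c) (fun _ => (1 : ℝ)) x *
          Set.indicator (XwS G m n) (fun _ => (1 : ℝ)) x) ∧
    (∀ b c p q : List E, ValidPair G b c → ValidPair G p q →
      (∀ m n : List E, ValidPair G m n → pf b c * pf p q ≠ pf m n) →
      ∀ x : ↥(FullShift E),
        Set.indicator (XwS G b c) (fun _ => (1 : ℝ)) x *
          Set.indicator (XwS G c b ∩ XwS G p q) (fun _ => (1 : ℝ)) (thetaF b c x) = 0) := by
  classical
  constructor
  · intro b c p q m n hbc hpq hmn hpf x
    by_cases hxbc : x ∈ XwS G b c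
    · simp only [Set.indicator_of_mem hxbc, one_mul]
      by_cases hy : thetaF b c x ∈ XwS G p q
      · have hy2 : thetaF b c x ∈ XwS G c b ∩ XwS G p q :=
          ⟨thetaF_mem_XwS hfin hbc.2.1 hxbc, hy⟩
        obtain ⟨m', n', hv', hpf', hx'⟩ := keyA hfin hbc hpq hxbc hy
        obtain ⟨rfl, rfl⟩ := pf_valid_inj hv'.2.2.2 hmn.2.2.2 (hpf'.symm.trans hpf)
        rw [Set.indicator_of_mem hy2, Set.indicator_of_mem hx']
      · have hxmn : x ∉ XwS G m n := fun hc => hy (keyB hfin hbc hpq hmn hpf hxbc hc)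
        rw [Set.indicator_of_notMem (fun hc => hy hc.2), Set.indicator_of_notMem hxmn]
    · rw [Set.indicator_of_notMem hxbc, zero_mul, zero_mul]
  · intro b c p q hbc hpq hnone x
    by_cases hxbc : x ∈ XwS G b c
    · by_cases hy : thetaF b c x ∈ XwS G c b ∩ XwS G p q
      · obtain ⟨m, n, hv, hpf', -⟩ := keyA hfin hbc hpq hxbc hy.2
        exact absurd hpf' (hnone m n hv)
      · rw [Set.indicator_of_notMem hy, mul_zero]
    · rw [Set.indicator_of_notMem hxbc, zero_mul]

end OTW
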